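/- Let b ∈ ℝⁿ with ‖b‖ > 1 and set b* = b/‖b‖² (so ‖b*‖ < 1). For any two distinct points x, y in the open unit ball B^n, the vector φ_{b*}(x) - φ_{b*}(y) is a scalar multiple of b if and only if the points x, y and b are collinear, i.e. y - x is a scalar multiple of b - x. (Equivalently: an affine plane E meeting B^n contains b if and only if the affine plane carrying φ_{b*}(E ∩ B^n) is parallel to the vector b.) -/

import Mathlib

open Metric

noncomputable section

/-- The involutive automorphism `φ_a` of the closed unit ball. -/
def phiAut {n : ℕ} (a x : EuclideanSpace ℝ (Fin n)) : EuclideanSpace ℝ (Fin n) :=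
  (1 - (inner ℝ x a : ℝ))⁻¹ •
    (a - ((inner ℝ a x : ℝ) / ‖a‖ ^ 2) • a
      - Real.sqrt (1 - ‖a‖ ^ 2) • (x - ((inner ℝ a x : ℝ) / ‖a‖ ^ 2) • a))

/-!
Up to a multiple of `a`, `φ_a x` is `-√(1 - ‖a‖²) / (1 - ⟪x, a⟫) • x`. Hence `φ_a x - φ_a y`
lies on the line `ℝ ∙ a` exactly when `(1 - ⟪y, a⟫) • x - (1 - ⟪x, a⟫) • y` does. For
`a = b*` we have `⟪b, a⟫ = 1`, and pairing with `a` identifies the multiple of `b`: the condition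
becomes `(1 - ⟪x, a⟫) • (y - x) = ⟪y - x, a⟫ • (b - x)`, i.e. collinearity of `x`, `y`, `b`.
-/

open Submodule RealInnerProductSpace

theorem phiAut_eq {n : ℕ} (a x : EuclideanSpace ℝ (Fin n)) :
    phiAut a x = (1 - ⟪x, a⟫)⁻¹ •
      ((1 - (1 - √(1 - ‖a‖ ^ 2)) * (⟪a, x⟫ / ‖a‖ ^ 2)) • a - √(1 - ‖a‖ ^ 2) • x) := by
  rw [phiAut]
  congr 1
  module

theorem phiAut_sub_mem_span_iff {n : ℕ} {a x y : EuclideanSpace ℝ (Fin n)} (ha : ‖a‖ < 1)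
    (hx : ⟪x, a⟫ ≠ 1) (hy : ⟪y, a⟫ ≠ 1) :
    phiAut a x - phiAut a y ∈ ℝ ∙ a ↔ (1 - ⟪y, a⟫) • x - (1 - ⟪x, a⟫) • y ∈ ℝ ∙ a := by
  set s := √(1 - ‖a‖ ^ 2)
  have hs : s ≠ 0 := (Real.sqrt_pos.2 (by nlinarith [norm_nonneg a])).ne'
  have hx' : 1 - ⟪x, a⟫ ≠ 0 := sub_ne_zero.2 hx.symm
  have hy' : 1 - ⟪y, a⟫ ≠ 0 := sub_ne_zero.2 hy.symm
  have hdiff : phiAut a x - phiAut a y =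
      ((1 - ⟪x, a⟫)⁻¹ * (1 - (1 - s) * (⟪a, x⟫ / ‖a‖ ^ 2))
        - (1 - ⟪y, a⟫)⁻¹ * (1 - (1 - s) * (⟪a, y⟫ / ‖a‖ ^ 2))) • a
      - (s * ((1 - ⟪x, a⟫) * (1 - ⟪y, a⟫))⁻¹) • ((1 - ⟪y, a⟫) • x - (1 - ⟪x, a⟫) • y) := by
    rw [phiAut_eq, phiAut_eq]
    match_scalars <;> field_simp <;> ring
  rw [hdiff, sub_mem_iff_right _ (smul_mem _ _ (mem_span_singleton_self a)),
    smul_mem_iff _ (by positivity)]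

theorem sub_mem_span_iff_exists_sub_eq_smul {F : Type*} [NormedAddCommGroup F]
    [InnerProductSpace ℝ F] {a b x y : F} (hba : ⟪b, a⟫ = 1) (hx : ⟪x, a⟫ ≠ 1) :
    (1 - ⟪y, a⟫) • x - (1 - ⟪x, a⟫) • y ∈ ℝ ∙ b ↔ ∃ s : ℝ, y - x = s • (b - x) := by
  have hx' : 1 - ⟪x, a⟫ ≠ 0 := sub_ne_zero.2 hx.symm
  rw [mem_span_singleton]
  constructor
  · rintro ⟨u, hu⟩
    have hu_eq : u = ⟪x, a⟫ - ⟪y, a⟫ := by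
      have hpair := congrArg (⟪·, a⟫) hu
      simp only [inner_sub_left, real_inner_smul_left, hba] at hpair
      linear_combination hpair
    refine ⟨(⟪y, a⟫ - ⟪x, a⟫) / (1 - ⟪x, a⟫), ?_⟩
    rw [hu_eq] at hu
    apply smul_right_injective F hx'
    simp only [smul_smul]
    rw [mul_div_cancel₀ _ hx']
    linear_combination (norm := module) hu
  · rintro ⟨s, hs⟩
    have hy : ⟪y, a⟫ = ⟪x, a⟫ + s * (1 - ⟪x, a⟫) := by
      rw [eq_add_of_sub_eq' hs, inner_add_left, real_inner_smul_left, inner_sub_left, hba]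
    refine ⟨-(s * (1 - ⟪x, a⟫)), ?_⟩
    rw [hy]
    linear_combination (norm := module) (1 - ⟪x, a⟫) • hs

theorem phi_bstar_parallel_iff_collinear_general
    {n : ℕ} (b : EuclideanSpace ℝ (Fin n)) (hb : 1 < ‖b‖)
    (x y : EuclideanSpace ℝ (Fin n))
    (hx : x ∈ ball (0 : EuclideanSpace ℝ (Fin n)) 1)
    (hy : y ∈ ball (0 : EuclideanSpace ℝ (Fin n)) 1) :
    (∃ t : ℝ, phiAut ((‖b‖ ^ 2)⁻¹ • b) x - phiAut ((‖b‖ ^ 2)⁻¹ • b) y = t • b) ↔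
      (∃ s : ℝ, y - x = s • (b - x)) := by
  set a := (‖b‖ ^ 2)⁻¹ • b
  have hb0 : ‖b‖ ≠ 0 := by positivity
  have ha : ‖a‖ < 1 := by
    rw [norm_smul, norm_inv, norm_pow, norm_norm, sq, mul_inv, inv_mul_cancel_right₀ hb0]
    exact inv_lt_one_of_one_lt₀ hb
  have hba : ⟪b, a⟫ = 1 := by
    rw [real_inner_smul_right, real_inner_self_eq_norm_sq, inv_mul_cancel₀ (by positivity)]
  have inner_ne_one : ∀ z ∈ ball (0 : EuclideanSpace ℝ (Fin n)) 1, ⟪z, a⟫ ≠ 1 := fun z hz =>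
    ((real_inner_le_norm z a).trans_lt (mul_lt_one_of_nonneg_of_lt_one_left (norm_nonneg z)
      (mem_ball_zero_iff.1 hz) ha.le)).ne
  have hspan : ℝ ∙ a = ℝ ∙ b := span_singleton_smul_eq (by simp [hb0]) b
  rw [← sub_mem_span_iff_exists_sub_eq_smul hba (inner_ne_one x hx), ← hspan,
    ← phiAut_sub_mem_span_iff ha (inner_ne_one x hx) (inner_ne_one y hy), hspan,
    mem_span_singleton]
  simp only [eq_comm]

theorem phi_bstar_parallel_iff_collinear
    {n : ℕ} (hn : 2 ≤ n) (b : EuclideanSpace ℝ (Fin n)) (hb : 1 < ‖b‖)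
    (x y : EuclideanSpace ℝ (Fin n))
    (hx : x ∈ ball (0 : EuclideanSpace ℝ (Fin n)) 1)
    (hy : y ∈ ball (0 : EuclideanSpace ℝ (Fin n)) 1) (hxy : x ≠ y) :
    (∃ t : ℝ, phiAut ((‖b‖ ^ 2)⁻¹ • b) x - phiAut ((‖b‖ ^ 2)⁻¹ • b) y = t • b) ↔
      (∃ s : ℝ, y - x = s • (b - x)) :=
  phi_bstar_parallel_iff_collinear_general b hb x y hx hy
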